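/- A basis B of a finite matroid M is a fundamental basis if and only if E(M) − B is a fundamental basis of the dual matroid M*. Consequently, the class of fundamental transversal matroids is closed under duality. -/

import Mathlib

open Matroid Set

variable {α : Type*}

/-- An element that lies in every base of `M`; a coloop. -/
def MCoPaper.Coloop (M : Matroid α) (e : α) : Prop := ∀ B, M.IsBase B → e ∈ B

/-- A circuit: a minimal dependent subset of the ground set. -/
def MCoPaper.Circuit (M : Matroid α) (C : Set α) : Prop :=
  C ⊆ M.E ∧ ¬ M.Indep C ∧ ∀ x ∈ C, M.Indep (C \ {x})

/-- A cyclic flat: a flat whose restriction has no coloops. -/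
def MCoPaper.CyclicFlat (M : Matroid α) (F : Set α) : Prop :=
  M.IsFlat F ∧ ∀ e ∈ F, ¬ MCoPaper.Coloop (M ↾ F) e

/-- The rank of a set: the largest cardinality of an independent subset. -/
noncomputable def MCoPaper.rk (M : Matroid α) (X : Set α) : ℕ :=
  sSup {n | ∃ I, M.Indep I ∧ I ⊆ X ∧ I.ncard = n}

open MCoPaper Classical in
/-- Mason's β function. -/
noncomputable def MCoPaper.beta [Fintype α] (M : Matroid α) (X : Finset α) : ℤ :=
  (rk M M.E : ℤ) - rk M ↑X -
    ∑ Y ∈ (Finset.univ.filter (fun Y : Finset α => CyclicFlat M ↑Y ∧ X ⊂ Y)).attach,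
      MCoPaper.beta M Y.1
  termination_by (Fintype.card α - X.card : ℕ)
  decreasing_by
    have hY := Y.2
    simp only [Finset.mem_filter, Finset.mem_univ, true_and] at hY
    have h1 : X.card < Y.1.card := Finset.card_lt_card hY.2
    have h2 : Y.1.card ≤ Fintype.card α := Y.1.card_le_univ
    omega

open MCoPaper Classical in
/-- Mason's α function. -/
noncomputable def MCoPaper.alpha [Fintype α] (M : Matroid α) (X : Finset α) : ℤ :=
  ((X.card : ℤ) - rk M ↑X) -
    ∑ F ∈ (Finset.univ.filter (fun F : Finset α => M.IsFlat ↑F ∧ F ⊂ X)).attach,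
      MCoPaper.alpha M F.1
  termination_by X.card
  decreasing_by
    have hF := F.2
    simp only [Finset.mem_filter, Finset.mem_univ, true_and] at hF
    exact Finset.card_lt_card hF.2

/-- `A : Fin n → Set α` is a presentation of `M`. -/
def MCoPaper.IsPresentation (M : Matroid α) {n : ℕ} (A : Fin n → Set α) : Prop :=
  (∀ i, A i ⊆ M.E) ∧
    ∀ I : Set α, M.Indep I ↔ ∃ φ : α → Fin n, Set.InjOn φ I ∧ ∀ x ∈ I, x ∈ A (φ x)

/-- `M` is a transversal matroid. -/
def MCoPaper.Transversal (M : Matroid α) : Prop :=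
  ∃ (n : ℕ) (A : Fin n → Set α), MCoPaper.IsPresentation M A

/-- `B` is a fundamental basis of `M`. -/
def MCoPaper.FundBasis (M : Matroid α) (B : Set α) : Prop :=
  M.IsBase B ∧ ∀ F, MCoPaper.CyclicFlat M F → F ⊆ M.closure (B ∩ F)

/-- `M` is a fundamental transversal matroid. -/
def MCoPaper.FundTransversal (M : Matroid α) : Prop :=
  ∃ B, MCoPaper.FundBasis M B

/-!
For `e ∉ X`, `e` lies in the closure of `X` exactly when it is a loop of `M ／ X`, that is, a
coloop of `(M ／ X)✶ = M✶ ↾ (E \ X)`. Thus `F` is a flat of `M` iff every element of `E \ F` is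
spanned in `M✶` by the rest of `E \ F`, and complementation exchanges the cyclic flats of `M` and
`M✶`. Since `B ∩ F` is a basis of `F` in `M` iff `(E \ B) ∩ (E \ F)` is a basis of `E \ F` in
`M✶`, the complement of a fundamental basis is a fundamental basis of the dual.
-/

namespace MCoPaper

variable {M : Matroid α} {B F X : Set α} {e : α}

lemma coloop_iff_isColoop : Coloop M e ↔ M.IsColoop e :=
  isColoop_iff_forall_mem_isBase.symm

lemma cyclicFlat_iff : CyclicFlat M F ↔ M.IsFlat F ∧ ∀ e ∈ F, e ∈ M.closure (F \ {e}) := by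
  refine and_congr_right fun hF ↦ forall₂_congr fun e he ↦ ?_
  rw [coloop_iff_isColoop, restrict_isColoop_iff hF.subset_ground]
  simp [he]

lemma mem_closure_and_notMem_iff :
    e ∈ M.closure X ∧ e ∉ X ↔ e ∉ M✶.closure ((M.E \ X) \ {e}) ∧ e ∈ M.E \ X := by
  rw [← contract_isLoop_iff_mem_closure, ← dual_isColoop_iff_isLoop, dual_contract,
    delete_eq_restrict, restrict_isColoop_iff (by simp), dual_ground]

lemma isFlat_iff_forall_mem_dual_closure (hF : F ⊆ M.E) :
    M.IsFlat F ↔ ∀ e ∈ M.E \ F, e ∈ M✶.closure ((M.E \ F) \ {e}) := by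
  have mem_closure_iff : ∀ e ∈ M.E \ F, e ∈ M.closure F ↔ e ∉ M✶.closure ((M.E \ F) \ {e}) :=
    fun e he ↦ by simpa [he, he.2] using mem_closure_and_notMem_iff (M := M) (X := F) (e := e)
  rw [isFlat_iff_closure_eq, subset_antisymm_iff, and_iff_left (M.subset_closure F hF)]
  refine ⟨fun h e he ↦ ?_, fun h e he ↦ ?_⟩
  · by_contra hn
    exact he.2 (h ((mem_closure_iff e he).2 hn))
  · by_contra heF
    have he' : e ∈ M.E \ F := ⟨M.closure_subset_ground F he, heF⟩
    exact (mem_closure_iff e he').1 he (h e he')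

lemma cyclicFlat_dual_compl_iff (hF : F ⊆ M.E) : CyclicFlat M✶ (M.E \ F) ↔ CyclicFlat M F := by
  have hFc : M.E \ F ⊆ M✶.E := sdiff_subset
  rw [cyclicFlat_iff, cyclicFlat_iff, ← isFlat_iff_forall_mem_dual_closure hF,
    isFlat_iff_forall_mem_dual_closure hFc, dual_dual, dual_ground, sdiff_sdiff_cancel_left hF,
    and_comm]

lemma FundBasis.dual (h : FundBasis M B) : FundBasis M✶ (M.E \ B) := by
  refine ⟨h.1.compl_isBase_dual, fun F hF ↦ ?_⟩
  have hFE : F ⊆ M.E := hF.1.subset_ground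
  have hFc : CyclicFlat M (M.E \ F) := by
    rwa [← cyclicFlat_dual_compl_iff sdiff_subset, sdiff_sdiff_cancel_left hFE]
  have hbasis : M.IsBasis (B ∩ (M.E \ F)) (M.E \ F) :=
    (h.1.indep.inter_right _).isBasis_of_subset_of_subset_closure inter_subset_right (h.2 _ hFc)
  simpa only [sdiff_sdiff_cancel_left hFE] using
    (h.1.compl_inter_isBasis_of_inter_isBasis hbasis).subset_closure

lemma fundBasis_iff_dual_fundBasis_compl (hB : B ⊆ M.E) :
    FundBasis M B ↔ FundBasis M✶ (M.E \ B) :=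
  ⟨FundBasis.dual, fun h ↦ by simpa [sdiff_sdiff_cancel_left hB] using h.dual⟩

lemma fundTransversal_iff_dual : FundTransversal M ↔ FundTransversal M✶ :=
  ⟨fun ⟨_, h⟩ ↦ ⟨_, h.dual⟩, fun ⟨_, h⟩ ↦ M.dual_dual ▸ ⟨_, h.dual⟩⟩

end MCoPaper

open MCoPaper

theorem stmt18_general (M : Matroid α) :
    (∀ B, M.IsBase B → (FundBasis M B ↔ FundBasis M✶ (M.E \ B))) ∧
    (FundTransversal M ↔ FundTransversal M✶) :=
  ⟨fun _ hB ↦ fundBasis_iff_dual_fundBasis_compl hB.subset_ground, fundTransversal_iff_dual⟩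

theorem stmt18 [Fintype α] (M : Matroid α) :
    (∀ B, M.IsBase B → (FundBasis M B ↔ FundBasis M✶ (M.E \ B))) ∧
    (FundTransversal M ↔ FundTransversal M✶) :=
  stmt18_general M
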